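/- The remainder of the tensor-product Bernstein cubature formula satisfies, for $F \in C^{2,2}([0,1]^2)$: $|R_{n_1,n_2}[F]| \le \frac{1}{4}\left(\frac{1}{n_1}\|F^{(2,0)}\|_\infty + \frac{1}{n_2}\|F^{(0,2)}\|_\infty\right)$. -/

import Mathlib

open Finset Set intervalIntegral

/-! The tensor-product Bernstein operator `B = ₓB_{n₁} ∘ ᵧB_{n₂}` integrates exactly to the
cubature rule, because every Bernstein basis polynomial of degree `n` has integral `1/(n+1)`.
Hence the remainder is `∫∫ (F - B F)`, and it suffices to bound `F - B F` pointwise. Writing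
`F - B F = (F - ᵧB F) + ᵧB (F - ₓB F)` and using that `B_n` is positive with `B_n 1 = 1`, this
reduces to the one-dimensional estimate `|f x - B_n f x| ≤ ‖f''‖ x (1 - x) / n ≤ ‖f''‖ / (4n)`.
That estimate follows from applying `B_n` to the Taylor bound
`|f t - f x - f' x (t - x)| ≤ ‖f''‖ (t - x)²`: `B_n` reproduces affine functions and
`B_n ((· - x)²) x = x (1 - x) / n`. -/

lemma Convex.abs_sub_sub_mul_sub_le {s : Set ℝ} (hs : Convex ℝ s) {f f' f'' : ℝ → ℝ} {M : ℝ}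
    (hf : ∀ t ∈ s, HasDerivWithinAt f (f' t) s t)
    (hf' : ∀ t ∈ s, HasDerivWithinAt f' (f'' t) s t)
    (hM : ∀ t ∈ s, |f'' t| ≤ M) {x a : ℝ} (hx : x ∈ s) (ha : a ∈ s) :
    |f a - f x - f' x * (a - x)| ≤ M * (a - x) ^ 2 := by
  have hxa : uIcc x a ⊆ s := hs.ordConnected.uIcc_subset hx ha
  have hM₀ : 0 ≤ M := (abs_nonneg _).trans (hM x hx)
  have hg : ∀ t ∈ uIcc x a,
      HasDerivWithinAt (fun u => f u - f' x * u) (f' t - f' x) (uIcc x a) t := fun t ht =>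
    (((hf t (hxa ht)).sub ((hasDerivWithinAt_id t s).const_mul (f' x))).mono hxa).congr_deriv
      (by ring)
  have hg' : ∀ t ∈ uIcc x a, ‖f' t - f' x‖ ≤ M * |a - x| := fun t ht =>
    calc ‖f' t - f' x‖ ≤ M * ‖t - x‖ :=
          hs.norm_image_sub_le_of_norm_hasDerivWithin_le hf' hM hx (hxa ht)
      _ ≤ M * |a - x| := mul_le_mul_of_nonneg_left (abs_sub_left_of_mem_uIcc ht) hM₀
  calc |f a - f x - f' x * (a - x)| = ‖(f a - f' x * a) - (f x - f' x * x)‖ := by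
        rw [Real.norm_eq_abs]; ring_nf
    _ ≤ M * |a - x| * ‖a - x‖ :=
        (convex_uIcc x a).norm_image_sub_le_of_norm_hasDerivWithin_le hg hg'
          left_mem_uIcc right_mem_uIcc
    _ = M * (a - x) ^ 2 := by rw [Real.norm_eq_abs, mul_assoc, abs_mul_abs_self, sq]

lemma natCast_div_mem_Icc {k n : ℕ} (hk : k ≤ n) : (k / n : ℝ) ∈ Set.Icc 0 1 :=
  ⟨by positivity, div_le_one_of_le₀ (by exact_mod_cast hk) n.cast_nonneg⟩

lemma bernsteinPolynomial_eval_nonneg (n k : ℕ) {x : ℝ} (hx : x ∈ Set.Icc 0 1) :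
    0 ≤ (bernsteinPolynomial ℝ n k).eval x := by
  have hx₀ : 0 ≤ x := hx.1
  have hx₁ : 0 ≤ 1 - x := sub_nonneg.2 hx.2
  simp only [bernsteinPolynomial, Polynomial.eval_mul, Polynomial.eval_pow, Polynomial.eval_sub,
    Polynomial.eval_one, Polynomial.eval_X, Polynomial.eval_natCast]
  positivity

lemma sum_bernsteinPolynomial_eval (n : ℕ) (x : ℝ) :
    ∑ k ∈ range (n + 1), (bernsteinPolynomial ℝ n k).eval x = 1 := by
  simpa [Polynomial.eval_finsetSum] using congrArg (Polynomial.eval x) (bernsteinPolynomial.sum ℝ n)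

lemma integral_bernsteinPolynomial_eval_succ {n ν : ℕ} (h : ν < n) :
    ∫ x in (0 : ℝ)..1, (bernsteinPolynomial ℝ n (ν + 1)).eval x
      = ∫ x in (0 : ℝ)..1, (bernsteinPolynomial ℝ n ν).eval x := by
  -- `b_{n+1,ν+1}' = (n+1) (b_{n,ν} - b_{n,ν+1})`, and `b_{n+1,ν+1}` vanishes at `0` and at `1`.
  have hFTC := integral_eq_sub_of_hasDerivAt
    (fun x _ => (bernsteinPolynomial ℝ (n + 1) (ν + 1)).hasDerivAt x)
    ((Polynomial.continuous _).intervalIntegrable 0 1)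
  simp only [bernsteinPolynomial.derivative_succ, Polynomial.eval_mul, Polynomial.eval_sub,
    Polynomial.eval_natCast, bernsteinPolynomial.eval_at_0, bernsteinPolynomial.eval_at_1,
    Nat.add_sub_cancel, integral_const_mul] at hFTC
  rw [integral_sub ((Polynomial.continuous _).intervalIntegrable 0 1)
    ((Polynomial.continuous _).intervalIntegrable 0 1), if_neg (by omega), if_neg (by omega),
    sub_zero] at hFTC
  linarith [(mul_eq_zero.1 hFTC).resolve_left (by positivity)]

lemma integral_bernsteinPolynomial_eval {n k : ℕ} (hk : k ≤ n) :
    ∫ x in (0 : ℝ)..1, (bernsteinPolynomial ℝ n k).eval x = 1 / (n + 1) := by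
  have hequal : ∀ j ≤ n, ∫ x in (0 : ℝ)..1, (bernsteinPolynomial ℝ n j).eval x
      = ∫ x in (0 : ℝ)..1, (bernsteinPolynomial ℝ n 0).eval x := by
    intro j hj
    induction j with
    | zero => rfl
    | succ j ih => rw [integral_bernsteinPolynomial_eval_succ hj, ih (by omega)]
  have hsum : ∑ k ∈ range (n + 1), ∫ x in (0 : ℝ)..1, (bernsteinPolynomial ℝ n k).eval x = 1 := by
    rw [← integral_finsetSum fun k _ => (Polynomial.continuous _).intervalIntegrable 0 1]
    simp [← Polynomial.eval_finsetSum, bernsteinPolynomial.sum]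
  rw [sum_congr rfl fun k hk => hequal k (Nat.lt_succ_iff.1 (mem_range.1 hk)), sum_const,
    card_range, nsmul_eq_mul] at hsum
  rw [hequal k hk]
  field_simp
  push_cast at hsum
  linarith

noncomputable def bernsteinOp (n : ℕ) : (ℝ → ℝ) →ₗ[ℝ] ℝ → ℝ where
  toFun f x := ∑ k ∈ range (n + 1), f (k / n) * (bernsteinPolynomial ℝ n k).eval x
  map_add' f g := by ext x; simp only [Pi.add_apply, add_mul, sum_add_distrib]
  map_smul' c f := by
    ext x
    simp only [Pi.smul_apply, smul_eq_mul, mul_assoc, mul_sum, RingHom.id_apply]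

lemma bernsteinOp_apply (n : ℕ) (f : ℝ → ℝ) (x : ℝ) :
    bernsteinOp n f x = ∑ k ∈ range (n + 1), f (k / n) * (bernsteinPolynomial ℝ n k).eval x := rfl

lemma bernsteinOp_const (n : ℕ) (c x : ℝ) : bernsteinOp n (fun _ => c) x = c := by
  rw [bernsteinOp_apply, ← mul_sum, sum_bernsteinPolynomial_eval, mul_one]

lemma bernsteinOp_affine {n : ℕ} (hn : 0 < n) (α β x : ℝ) :
    bernsteinOp n (fun t => α + β * (t - x)) x = α := by
  have hmean : ∑ k ∈ range (n + 1), (k : ℝ) * (bernsteinPolynomial ℝ n k).eval x = n * x := by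
    simpa [Polynomial.eval_finsetSum] using
      congrArg (Polynomial.eval x) (bernsteinPolynomial.sum_smul ℝ n)
  have hn' : (n : ℝ) ≠ 0 := by positivity
  simp only [bernsteinOp_apply, add_mul, sum_add_distrib, ← mul_sum, sum_bernsteinPolynomial_eval,
    mul_assoc, sub_mul, sum_sub_distrib, div_mul_eq_mul_div, ← sum_div, hmean]
  field_simp
  ring

lemma bernsteinOp_sq_sub {n : ℕ} (hn : 0 < n) (x : ℝ) :
    bernsteinOp n (fun t => (t - x) ^ 2) x = x * (1 - x) / n := by
  have hvar : ∑ k ∈ range (n + 1), ((n : ℝ) * x - k) ^ 2 * (bernsteinPolynomial ℝ n k).eval x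
      = n * x * (1 - x) := by
    simpa [Polynomial.eval_finsetSum] using
      congrArg (Polynomial.eval x) (bernsteinPolynomial.variance ℝ n)
  have hn' : (n : ℝ) ≠ 0 := by positivity
  have hk : ∀ k : ℕ, ((k : ℝ) / n - x) ^ 2 = ((n : ℝ) * x - k) ^ 2 / n ^ 2 := fun k => by
    field_simp; ring
  simp only [bernsteinOp_apply, hk, div_mul_eq_mul_div, ← sum_div, hvar]
  field_simp

lemma abs_bernsteinOp_le {n : ℕ} {g h : ℝ → ℝ} (hgh : ∀ k ≤ n, |g (k / n)| ≤ h (k / n))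
    {x : ℝ} (hx : x ∈ Set.Icc 0 1) : |bernsteinOp n g x| ≤ bernsteinOp n h x := by
  simp only [bernsteinOp_apply]
  refine (abs_sum_le_sum_abs _ _).trans (sum_le_sum fun k hk => ?_)
  rw [abs_mul, abs_of_nonneg (bernsteinPolynomial_eval_nonneg n k hx)]
  exact mul_le_mul_of_nonneg_right (hgh k (Nat.lt_succ_iff.1 (mem_range.1 hk)))
    (bernsteinPolynomial_eval_nonneg n k hx)

lemma integral_bernsteinOp (n : ℕ) (f : ℝ → ℝ) :
    ∫ x in (0 : ℝ)..1, bernsteinOp n f x = (∑ k ∈ range (n + 1), f (k / n)) / (n + 1) := by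
  simp only [bernsteinOp_apply]
  rw [integral_finsetSum fun k _ => ((Polynomial.continuous _).const_mul _).intervalIntegrable 0 1,
    sum_div]
  refine sum_congr rfl fun k hk => ?_
  rw [integral_const_mul, integral_bernsteinPolynomial_eval (Nat.lt_succ_iff.1 (mem_range.1 hk)),
    mul_one_div]

lemma abs_sub_bernsteinOp_le {n : ℕ} (hn : 0 < n) {f f' f'' : ℝ → ℝ} {M : ℝ}
    (hf : ∀ t ∈ Set.Icc (0 : ℝ) 1, HasDerivWithinAt f (f' t) (Set.Icc 0 1) t)
    (hf' : ∀ t ∈ Set.Icc (0 : ℝ) 1, HasDerivWithinAt f' (f'' t) (Set.Icc 0 1) t)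
    (hM : ∀ t ∈ Set.Icc (0 : ℝ) 1, |f'' t| ≤ M) {x : ℝ} (hx : x ∈ Set.Icc 0 1) :
    |f x - bernsteinOp n f x| ≤ M / (4 * n) := by
  set tangent : ℝ → ℝ := fun t => f x + f' x * (t - x)
  have htaylor : ∀ k ≤ n, |(tangent - f) (k / n)| ≤ (M • fun t => (t - x) ^ 2) (k / n) :=
    fun k hk => by
      rw [← abs_neg]
      simpa [tangent, sub_add_eq_sub_sub] using
        (convex_Icc (0 : ℝ) 1).abs_sub_sub_mul_sub_le hf hf' hM hx (natCast_div_mem_Icc hk)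
  have hM₀ : 0 ≤ M := (abs_nonneg _).trans (hM x hx)
  calc |f x - bernsteinOp n f x| = |bernsteinOp n (tangent - f) x| := by
        rw [map_sub, Pi.sub_apply, bernsteinOp_affine hn]
    _ ≤ bernsteinOp n (M • fun t => (t - x) ^ 2) x := abs_bernsteinOp_le htaylor hx
    _ = M * (x * (1 - x) / n) := by
        rw [map_smul, Pi.smul_apply, bernsteinOp_sq_sub hn, smul_eq_mul]
    _ ≤ M * (1 / 4 / n) := by
        gcongr
        nlinarith [sq_nonneg (2 * x - 1)]
    _ = M / (4 * n) := by ring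

lemma abs_sub_bernsteinOp_bernsteinOp_le {n₁ n₂ : ℕ} (hn₁ : 0 < n₁) (hn₂ : 0 < n₂)
    {F Fx Fxx Fy Fyy : ℝ → ℝ → ℝ} {M₁ M₂ : ℝ}
    (hFx : ∀ y ∈ Set.Icc (0 : ℝ) 1, ∀ x ∈ Set.Icc (0 : ℝ) 1,
      HasDerivWithinAt (fun t => F t y) (Fx x y) (Set.Icc 0 1) x)
    (hFxx : ∀ y ∈ Set.Icc (0 : ℝ) 1, ∀ x ∈ Set.Icc (0 : ℝ) 1,
      HasDerivWithinAt (fun t => Fx t y) (Fxx x y) (Set.Icc 0 1) x)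
    (hFy : ∀ x ∈ Set.Icc (0 : ℝ) 1, ∀ y ∈ Set.Icc (0 : ℝ) 1,
      HasDerivWithinAt (fun t => F x t) (Fy x y) (Set.Icc 0 1) y)
    (hFyy : ∀ x ∈ Set.Icc (0 : ℝ) 1, ∀ y ∈ Set.Icc (0 : ℝ) 1,
      HasDerivWithinAt (fun t => Fy x t) (Fyy x y) (Set.Icc 0 1) y)
    (hM₁ : ∀ x ∈ Set.Icc (0 : ℝ) 1, ∀ y ∈ Set.Icc (0 : ℝ) 1, |Fxx x y| ≤ M₁)
    (hM₂ : ∀ x ∈ Set.Icc (0 : ℝ) 1, ∀ y ∈ Set.Icc (0 : ℝ) 1, |Fyy x y| ≤ M₂)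
    {x y : ℝ} (hx : x ∈ Set.Icc 0 1) (hy : y ∈ Set.Icc 0 1) :
    |F x y - bernsteinOp n₂ (fun t => bernsteinOp n₁ (fun s => F s t) x) y|
      ≤ M₁ / (4 * n₁) + M₂ / (4 * n₂) := by
  have hsplit : F x y - bernsteinOp n₂ (fun t => bernsteinOp n₁ (fun s => F s t) x) y
      = (F x y - bernsteinOp n₂ (F x) y)
        + bernsteinOp n₂ (F x - fun t => bernsteinOp n₁ (fun s => F s t) x) y := by
    rw [map_sub, Pi.sub_apply]
    ring
  have hinner : |F x y - bernsteinOp n₂ (F x) y| ≤ M₂ / (4 * n₂) :=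
    abs_sub_bernsteinOp_le hn₂ (hFy x hx) (hFyy x hx) (hM₂ x hx) hy
  have houter : |bernsteinOp n₂ (F x - fun t => bernsteinOp n₁ (fun s => F s t) x) y|
      ≤ M₁ / (4 * n₁) := by
    refine (abs_bernsteinOp_le (h := fun _ => M₁ / (4 * n₁)) (fun k hk => ?_) hy).trans_eq
      (bernsteinOp_const _ _ _)
    have hnode := natCast_div_mem_Icc hk
    exact abs_sub_bernsteinOp_le hn₁ (hFx _ hnode) (hFxx _ hnode) (fun t ht => hM₁ t ht _ hnode) hx
  rw [hsplit]
  linarith [abs_add_le (F x y - bernsteinOp n₂ (F x) y)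
    (bernsteinOp n₂ (F x - fun t => bernsteinOp n₁ (fun s => F s t) x) y)]

lemma integral_integral_bernsteinOp_bernsteinOp (n₁ n₂ : ℕ) (F : ℝ → ℝ → ℝ) :
    ∫ x in (0 : ℝ)..1, ∫ y in (0 : ℝ)..1,
        bernsteinOp n₂ (fun t => bernsteinOp n₁ (fun s => F s t) x) y
      = (∑ i ∈ range (n₁ + 1), ∑ j ∈ range (n₂ + 1), F (i / n₁) (j / n₂))
          / ((n₁ + 1) * (n₂ + 1)) := by
  have hsum : ∀ x, ∑ j ∈ range (n₂ + 1), bernsteinOp n₁ (fun s => F s (j / n₂)) x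
      = bernsteinOp n₁ (fun s => ∑ j ∈ range (n₂ + 1), F s (j / n₂)) x := fun x => by
    rw [← Finset.sum_apply, ← map_sum, Finset.sum_fn]
  simp only [integral_bernsteinOp, hsum, integral_div]
  rw [div_div]

lemma ContinuousOn.continuousOn_intervalIntegral {F : ℝ → ℝ → ℝ} {a b c d : ℝ} (hab : a ≤ b)
    (hcd : c ≤ d) (hF : ContinuousOn (fun p : ℝ × ℝ => F p.1 p.2) (Set.Icc a b ×ˢ Set.Icc c d)) :
    ContinuousOn (fun x => ∫ y in c..d, F x y) (Set.Icc a b) := by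
  set extension : ℝ → ℝ → ℝ := fun x y => F (projIcc a b hab x) (projIcc c d hcd y)
  have hext : Continuous (Function.uncurry extension) :=
    hF.comp_continuous
      (f := fun p : ℝ × ℝ => ((projIcc a b hab p.1 : ℝ), (projIcc c d hcd p.2 : ℝ)))
      (by fun_prop) fun p => ⟨(projIcc a b hab p.1).2, (projIcc c d hcd p.2).2⟩
  refine (continuous_parametric_intervalIntegral_of_continuous' hext c d).continuousOn.congr
    fun x hx => integral_congr fun y hy => ?_
  rw [uIcc_of_le hcd] at hy
  simp [extension, projIcc_of_mem hab hx, projIcc_of_mem hcd hy]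

lemma abs_integral_integral_sub_le {F G : ℝ → ℝ → ℝ} {a b c d C : ℝ} (hab : a ≤ b) (hcd : c ≤ d)
    (hF : ContinuousOn (fun p : ℝ × ℝ => F p.1 p.2) (Set.Icc a b ×ˢ Set.Icc c d))
    (hG : ContinuousOn (fun p : ℝ × ℝ => G p.1 p.2) (Set.Icc a b ×ˢ Set.Icc c d))
    (hFG : ∀ x ∈ Set.Icc a b, ∀ y ∈ Set.Icc c d, |F x y - G x y| ≤ C) :
    |(∫ x in a..b, ∫ y in c..d, F x y) - ∫ x in a..b, ∫ y in c..d, G x y|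
      ≤ C * (d - c) * (b - a) := by
  have hslice : ∀ {H : ℝ → ℝ → ℝ},
      ContinuousOn (fun p : ℝ × ℝ => H p.1 p.2) (Set.Icc a b ×ˢ Set.Icc c d) →
      ∀ x ∈ Set.Icc a b, IntervalIntegrable (H x) MeasureTheory.volume c d :=
    fun hH x hx =>
      (hH.comp (f := fun y => (x, y)) (by fun_prop) fun _ hy => ⟨hx, hy⟩).intervalIntegrable_of_Icc
        hcd
  have hinner : ∀ x ∈ Set.Icc a b,
      ‖(∫ y in c..d, F x y) - ∫ y in c..d, G x y‖ ≤ C * (d - c) := fun x hx => by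
    rw [← integral_sub (hslice hF x hx) (hslice hG x hx), ← abs_of_nonneg (sub_nonneg.2 hcd)]
    exact norm_integral_le_of_norm_le_const fun y hy =>
      hFG x hx y (Ioc_subset_Icc_self (uIoc_of_le hcd ▸ hy))
  rw [← integral_sub ((hF.continuousOn_intervalIntegral hab hcd).intervalIntegrable_of_Icc hab)
    ((hG.continuousOn_intervalIntegral hab hcd).intervalIntegrable_of_Icc hab),
    ← abs_of_nonneg (sub_nonneg.2 hab)]
  exact norm_integral_le_of_norm_le_const fun x hx =>
    hinner x (Ioc_subset_Icc_self (uIoc_of_le hab ▸ hx))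

lemma IsCompact.le_ciSup_of_continuousOn {X : Type*} [TopologicalSpace X] {s : Set X}
    (hs : IsCompact s) {g : X → ℝ} (hg : ContinuousOn g s) {p : X} (hp : p ∈ s) :
    g p ≤ ⨆ q : s, g q :=
  le_ciSup (f := fun q : s => g q) (by simpa [image_eq_range] using hs.bddAbove_image hg) ⟨p, hp⟩

/-- two-term remainder bound for the tensor-product Bernstein cubature
formula, for `F ∈ C^{2,2}([0,1]²)`. -/
theorem stmt6 (n₁ n₂ : ℕ) (hn₁ : 0 < n₁) (hn₂ : 0 < n₂)
    (F Fx Fxx Fy Fyy : ℝ → ℝ → ℝ)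
    (hFc : ContinuousOn (fun p : ℝ × ℝ => F p.1 p.2)
      (Set.Icc (0:ℝ) 1 ×ˢ Set.Icc (0:ℝ) 1))
    (hFx : ∀ y ∈ Set.Icc (0:ℝ) 1, ∀ x ∈ Set.Icc (0:ℝ) 1,
      HasDerivWithinAt (fun t => F t y) (Fx x y) (Set.Icc (0:ℝ) 1) x)
    (hFxx : ∀ y ∈ Set.Icc (0:ℝ) 1, ∀ x ∈ Set.Icc (0:ℝ) 1,
      HasDerivWithinAt (fun t => Fx t y) (Fxx x y) (Set.Icc (0:ℝ) 1) x)
    (hFy : ∀ x ∈ Set.Icc (0:ℝ) 1, ∀ y ∈ Set.Icc (0:ℝ) 1,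
      HasDerivWithinAt (fun t => F x t) (Fy x y) (Set.Icc (0:ℝ) 1) y)
    (hFyy : ∀ x ∈ Set.Icc (0:ℝ) 1, ∀ y ∈ Set.Icc (0:ℝ) 1,
      HasDerivWithinAt (fun t => Fy x t) (Fyy x y) (Set.Icc (0:ℝ) 1) y)
    (hFxxc : ContinuousOn (fun p : ℝ × ℝ => Fxx p.1 p.2)
      (Set.Icc (0:ℝ) 1 ×ˢ Set.Icc (0:ℝ) 1))
    (hFyyc : ContinuousOn (fun p : ℝ × ℝ => Fyy p.1 p.2)
      (Set.Icc (0:ℝ) 1 ×ˢ Set.Icc (0:ℝ) 1)) :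
    |(∫ x in (0:ℝ)..1, ∫ y in (0:ℝ)..1, F x y) -
        (1 / (((n₁ : ℝ) + 1) * ((n₂ : ℝ) + 1))) *
          ∑ i ∈ Finset.range (n₁ + 1), ∑ j ∈ Finset.range (n₂ + 1),
            F ((i : ℝ) / n₁) ((j : ℝ) / n₂)| ≤
      (1 / 4) * ((1 / (n₁ : ℝ)) * (⨆ p : (Set.Icc (0:ℝ) 1 ×ˢ Set.Icc (0:ℝ) 1 : Set (ℝ × ℝ)),
          |Fxx (p : ℝ × ℝ).1 (p : ℝ × ℝ).2|) +
        (1 / (n₂ : ℝ)) * (⨆ p : (Set.Icc (0:ℝ) 1 ×ˢ Set.Icc (0:ℝ) 1 : Set (ℝ × ℝ)),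
          |Fyy (p : ℝ × ℝ).1 (p : ℝ × ℝ).2|)) := by
  have hsquare : IsCompact (Set.Icc (0 : ℝ) 1 ×ˢ Set.Icc (0 : ℝ) 1) :=
    isCompact_Icc.prod isCompact_Icc
  have hM₁ := fun x hx y hy => hsquare.le_ciSup_of_continuousOn hFxxc.abs (p := (x, y)) ⟨hx, hy⟩
  have hM₂ := fun x hx y hy => hsquare.le_ciSup_of_continuousOn hFyyc.abs (p := (x, y)) ⟨hx, hy⟩
  set B : ℝ → ℝ → ℝ := fun x y => bernsteinOp n₂ (fun t => bernsteinOp n₁ (fun s => F s t) x) y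
  have hB : Continuous fun p : ℝ × ℝ => B p.1 p.2 := by
    simp only [B, bernsteinOp_apply]
    fun_prop
  rw [one_div_mul_eq_div, ← integral_integral_bernsteinOp_bernsteinOp]
  calc _ ≤ _ := abs_integral_integral_sub_le zero_le_one zero_le_one hFc hB.continuousOn
        fun x hx y hy => abs_sub_bernsteinOp_bernsteinOp_le hn₁ hn₂ hFx hFxx hFy hFyy
          hM₁ hM₂ hx hy
    _ = _ := by ring
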